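/- Let f : ℝ^n × ℝ^m → ℝ be twice continuously differentiable and satisfy Assumption A, and let z* be a local saddle point of f. Then there exists φ_min ≥ L such that for every φ > φ_min, z* is a locally exponentially stable equilibrium of the O(1)-resolution ODE of the Regularised Damped Newton method, ż = −(∇F(z) + φ I)^{-1} F(z). -/

import Mathlib

open Matrix MeasureTheory Filter

noncomputable section

abbrev Idx (n m : ℕ) := Fin n ⊕ Fin m
abbrev Emm (n m : ℕ) := EuclideanSpace ℝ (Idx n m)

def toE {n m : ℕ} (v : Idx n m → ℝ) : Emm n m := WithLp.toLp 2 v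
def ofE {n m : ℕ} (v : Emm n m) : Idx n m → ℝ := v

def splice {n m : ℕ} (a b : Emm n m) : Emm n m :=
  toE (Sum.elim (fun i => a (Sum.inl i)) (fun j => b (Sum.inr j)))

def IsLocalSaddle {n m : ℕ} (f : Emm n m → ℝ) (zs : Emm n m) : Prop :=
  ∃ U ∈ nhds zs, ∀ w ∈ U, f (splice zs w) ≤ f zs ∧ f zs ≤ f (splice w zs)

def Fvec {n m : ℕ} (f : Emm n m → ℝ) (z : Emm n m) : Emm n m :=
  toE (Sum.elim (fun i => gradient f z (Sum.inl i)) (fun j => -(gradient f z (Sum.inr j))))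

def hessMat {n m : ℕ} (f : Emm n m → ℝ) (z : Emm n m) : Matrix (Idx n m) (Idx n m) ℝ :=
  Matrix.of fun i j => fderiv ℝ (fun w => gradient f w i) z (EuclideanSpace.single j 1)

def Hmat {n m : ℕ} (f : Emm n m → ℝ) (z : Emm n m) : Matrix (Idx n m) (Idx n m) ℝ :=
  Matrix.diagonal (Sum.elim (fun _ => (-1 : ℝ)) (fun _ => 1)) * hessMat f z

def Lam (n m : ℕ) (τ : ℝ) : Matrix (Idx n m) (Idx n m) ℝ :=
  Matrix.diagonal (Sum.elim (fun _ => 1 / τ) (fun _ => (1 : ℝ)))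

def DFmat {n m : ℕ} (f : Emm n m → ℝ) (z : Emm n m) : Matrix (Idx n m) (Idx n m) ℝ :=
  Matrix.of fun i j => fderiv ℝ (fun w => Fvec f w i) z (EuclideanSpace.single j 1)

def D2Fmat {n m : ℕ} (f : Emm n m → ℝ) (z v : Emm n m) : Matrix (Idx n m) (Idx n m) ℝ :=
  Matrix.of fun i j => fderiv ℝ (fun w => DFmat f w i j) z v

def IsEigen {n m : ℕ} (A : Matrix (Idx n m) (Idx n m) ℝ) (κ : ℂ) : Prop :=
  ∃ v : Idx n m → ℂ, v ≠ 0 ∧ A.map (fun x : ℝ => (x : ℂ)) *ᵥ v = κ • v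

def AssumptionA {n m : ℕ} (f : Emm n m → ℝ) (L : ℝ) : Prop :=
  (∀ zs, IsLocalSaddle f zs → IsUnit (hessMat f zs)) ∧
    LipschitzWith L.toNNReal (fun z => gradient f z)

def AssumptionB {n m : ℕ} (f : Emm n m → ℝ) (L : ℝ) : Prop :=
  (∀ z, IsUnit (hessMat f z)) ∧ LipschitzWith L.toNNReal (fun z => gradient f z)

def IsSolOn {n m : ℕ} (W : Emm n m → Emm n m) (Z : ℝ → Emm n m) : Prop :=
  ∀ t ∈ Set.Ici (0 : ℝ), HasDerivWithinAt Z (W (Z t)) (Set.Ici 0) t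

def IsLocExpStableEquilib {n m : ℕ} (W : Emm n m → Emm n m) (ze : Emm n m) : Prop :=
  W ze = 0 ∧ ∃ δ M lam : ℝ, 0 < δ ∧ 0 < M ∧ 0 < lam ∧
    ∀ Z : ℝ → Emm n m, IsSolOn W Z → ‖Z 0 - ze‖ < δ →
      ∀ t ≥ (0:ℝ), ‖Z t - ze‖ ≤ M * Real.exp (-lam * t) * ‖Z 0 - ze‖

def IsLocExpStableFixed {n m : ℕ} (w : Emm n m → Emm n m) (ze : Emm n m) : Prop :=
  w ze = ze ∧ ∃ δ M γ : ℝ, 0 < δ ∧ 0 < M ∧ 0 < γ ∧ γ < 1 ∧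
    ∀ z0 : Emm n m, ‖z0 - ze‖ < δ → ∀ k : ℕ, ‖w^[k] z0 - ze‖ ≤ M * γ ^ k * ‖z0 - ze‖

def StableFixed {n m : ℕ} (w : Emm n m → Emm n m) (ze : Emm n m) : Prop :=
  ∀ ε > 0, ∃ δ > 0, ∀ z0 : Emm n m, ‖z0 - ze‖ < δ → ∀ k : ℕ, ‖w^[k] z0 - ze‖ < ε

def UnstableFixed {n m : ℕ} (w : Emm n m → Emm n m) (ze : Emm n m) : Prop :=
  w ze = ze ∧ ¬ StableFixed w ze

def ConvergesToUnstable {n m : ℕ} (w : Emm n m → Emm n m) (z0 : Emm n m) : Prop :=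
  ∃ ze : Emm n m, UnstableFixed w ze ∧ Tendsto (fun k => w^[k] z0) atTop (nhds ze)

/-!
At a local saddle point `z*` the gradient vanishes, so `F(z*) = 0`, and `A = ∇F(z*) = J ∇²f(z*)`
with `J = diag(I, -I)`. The second-order conditions in `x` and in `y` together with the symmetry
of `∇²f` make `A` monotone, `⟪u, A u⟫ = ⟪u_x, ∇²f u_x⟫ - ⟪u_y, ∇²f u_y⟫ ≥ 0`, and invertibility of
`∇²f(z*)` gives `‖A u‖ ≥ σ ‖u‖`. Along the flow, `V = ‖F‖²` has derivative `-2 ⟪(D + φ) e, D e⟫`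
with `D = ∇F(z)` and `e = (D + φ)⁻¹ F(z)`; while `D` stays close to `A` this is at most `-c V`,
for every `φ > 0`. Near `z*`, `‖F(z)‖` is comparable to `‖z - z*‖`, so Grönwall's inequality
turns the decay of `V` into exponential decay of `‖z - z*‖`, and `φ_min = L` works.
-/

open Set Metric Topology
open scoped InnerProductSpace

lemma exists_first_hitting_time {g : ℝ → ℝ} {r T : ℝ} (hT : 0 ≤ T) (hg : ContinuousOn g (Icc 0 T))
    (h0 : g 0 < r) (hgT : r ≤ g T) :
    ∃ t₀ ∈ Icc 0 T, g t₀ = r ∧ ∀ t ∈ Icc 0 t₀, g t ≤ r := by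
  set S := Icc 0 T ∩ g ⁻¹' Ici r
  have hS : IsCompact S := isCompact_Icc.of_isClosed_subset
    (hg.preimage_isClosed_of_isClosed isClosed_Icc isClosed_Ici) inter_subset_left
  have hSbdd : BddBelow S := ⟨0, fun t ht => ht.1.1⟩
  obtain ⟨⟨ht₀0, ht₀T⟩, ht₀r⟩ := hS.sInf_mem ⟨T, ⟨hT, le_rfl⟩, hgT⟩
  set t₀ := sInf S
  have hfirst : ∀ t ∈ Icc 0 t₀, r ≤ g t → t = t₀ := fun t ht hrt =>
    le_antisymm ht.2 (csInf_le hSbdd ⟨⟨ht.1, ht.2.trans ht₀T⟩, hrt⟩)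
  obtain ⟨s, hs, hgs⟩ := intermediate_value_Icc ht₀0 (hg.mono (Icc_subset_Icc_right ht₀T))
    ⟨h0.le, ht₀r⟩
  have hgt₀ : g t₀ = r := hfirst s hs hgs.ge ▸ hgs
  refine ⟨t₀, ⟨ht₀0, ht₀T⟩, hgt₀, fun t ht => ?_⟩
  by_contra! hlt
  exact (hfirst t ht hlt.le ▸ hlt).ne' hgt₀

section Lyapunov

variable {n m : ℕ} {W : Emm n m → Emm n m} {V : Emm n m → ℝ} {V' : Emm n m → Emm n m →L[ℝ] ℝ}
  {ze : Emm n m} {ρ a b c : ℝ}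

lemma le_mul_exp_of_isSolOn {s : Set (Emm n m)} {T : ℝ}
    (hV : ∀ z ∈ s, HasFDerivAt V (V' z) z) (hdec : ∀ z ∈ s, V' z (W z) ≤ -c * V z)
    {Z : ℝ → Emm n m} (hZ : IsSolOn W Z) (hZs : ∀ t ∈ Icc 0 T, Z t ∈ s) :
    ∀ t ∈ Icc 0 T, V (Z t) ≤ V (Z 0) * Real.exp (-c * t) := by
  have hderiv : ∀ t ∈ Icc 0 T, HasDerivWithinAt (V ∘ Z) (V' (Z t) (W (Z t))) (Ici 0) t :=
    fun t ht => (hV _ (hZs t ht)).comp_hasDerivWithinAt t (hZ t ht.1)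
  have := le_gronwallBound_of_liminf_deriv_right_le (f := V ∘ Z) (δ := V (Z 0)) (K := -c)
    (ε := 0)
    (fun t ht => (hderiv t ht).continuousWithinAt.mono Icc_subset_Ici_self)
    (fun t ht r hr => ((hderiv t (Ico_subset_Icc_self ht)).mono
      (Ici_subset_Ici.2 ht.1)).liminf_right_slope_le hr)
    le_rfl (fun t ht => (hdec _ (hZs t (Ico_subset_Icc_self ht))).trans_eq (add_zero _).symm)
  intro t ht
  simpa [gronwallBound_ε0, mul_comm] using this t ht

lemma mul_norm_sub_le_of_lyapunov (ha : 0 ≤ a) (hb : 0 ≤ b)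
    (hV : ∀ z ∈ closedBall ze ρ, HasFDerivAt V (V' z) z)
    (hbound : ∀ z ∈ closedBall ze ρ, (a * ‖z - ze‖) ^ 2 ≤ V z ∧ V z ≤ (b * ‖z - ze‖) ^ 2)
    (hdec : ∀ z ∈ closedBall ze ρ, V' z (W z) ≤ -c * V z) {Z : ℝ → Emm n m} (hZ : IsSolOn W Z)
    {T : ℝ} (hZT : ∀ t ∈ Icc 0 T, Z t ∈ closedBall ze ρ) :
    ∀ t ∈ Icc 0 T, a * ‖Z t - ze‖ ≤ b * ‖Z 0 - ze‖ * Real.exp (-(c / 2) * t) := by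
  intro t ht
  have hexp : Real.exp (-c * t) = Real.exp (-(c / 2) * t) ^ 2 := by
    rw [← Real.exp_nat_mul]; ring_nf
  refine (pow_le_pow_iff_left₀ (by positivity) (by positivity) two_ne_zero).1 ?_
  calc (a * ‖Z t - ze‖) ^ 2 ≤ V (Z t) := (hbound _ (hZT t ht)).1
    _ ≤ V (Z 0) * Real.exp (-c * t) := le_mul_exp_of_isSolOn hV hdec hZ hZT t ht
    _ ≤ (b * ‖Z 0 - ze‖) ^ 2 * Real.exp (-c * t) := by
      gcongr; exact (hbound _ (hZT 0 ⟨le_rfl, ht.1.trans ht.2⟩)).2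
    _ = _ := by rw [hexp]; ring

theorem isLocExpStableEquilib_of_lyapunov (hρ : 0 < ρ) (ha : 0 < a) (hb : 0 < b) (hc : 0 < c)
    (hW : W ze = 0) (hV : ∀ z ∈ closedBall ze ρ, HasFDerivAt V (V' z) z)
    (hbound : ∀ z ∈ closedBall ze ρ, (a * ‖z - ze‖) ^ 2 ≤ V z ∧ V z ≤ (b * ‖z - ze‖) ^ 2)
    (hdec : ∀ z ∈ closedBall ze ρ, V' z (W z) ≤ -c * V z) :
    IsLocExpStableEquilib W ze := by
  -- with `‖Z 0 - ze‖ < a ρ / b` the decay bound forbids `Z` from ever reaching distance `ρ`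
  refine ⟨hW, min ρ (a * ρ / b), b / a, c / 2, by positivity, by positivity, by positivity,
    fun Z hZ hZ0 => ?_⟩
  have hdist := fun T => mul_norm_sub_le_of_lyapunov (T := T) ha.le hb.le hV hbound hdec hZ
  have hstay : ∀ t ≥ 0, ‖Z t - ze‖ < ρ := by
    by_contra! ⟨T, hT, hρT⟩
    have hZc : ContinuousOn (fun t => ‖Z t - ze‖) (Icc 0 T) := fun t ht =>
      ((hZ t ht.1).continuousWithinAt.mono Icc_subset_Ici_self).sub_const ze |>.norm
    obtain ⟨t₀, ht₀, hgt₀, hbefore⟩ := exists_first_hitting_time hT hZc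
      (hZ0.trans_le (min_le_left _ _)) hρT
    have h := hdist t₀ (fun t ht => mem_closedBall_iff_norm.2 (hbefore t ht)) t₀ ⟨ht₀.1, le_rfl⟩
    have hδ : b * ‖Z 0 - ze‖ < a * ρ := by
      have := hZ0.trans_le (min_le_right _ _)
      rwa [lt_div_iff₀ hb, mul_comm] at this
    have hexp : Real.exp (-(c / 2) * t₀) ≤ 1 := Real.exp_le_one_iff.2 (by nlinarith [ht₀.1])
    rw [hgt₀] at h
    have := mul_le_of_le_one_right (by positivity : 0 ≤ b * ‖Z 0 - ze‖) hexp
    linarith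
  intro t ht
  have h := hdist t (fun s hs => mem_closedBall_iff_norm.2 (hstay s hs.1).le) t ⟨ht, le_rfl⟩
  rw [div_mul_eq_mul_div, div_mul_eq_mul_div, le_div_iff₀ ha]
  linarith

end Lyapunov

section LinearEstimates

variable {E F : Type*} [NormedAddCommGroup E] [InnerProductSpace ℝ E]
  [NormedAddCommGroup F] [NormedSpace ℝ F]

lemma le_inner_add_smul_apply {A D : E →L[ℝ] E} {σ ε φ : ℝ}
    (hA : ∀ u, 0 ≤ ⟪u, A u⟫_ℝ) (hσ : ∀ u, σ * ‖u‖ ≤ ‖A u‖) (hDA : ‖D - A‖ ≤ ε)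
    (hεσ : ε ≤ σ / 2) (hφ : 0 ≤ φ) (hφε : φ * ε ≤ σ ^ 2 / 8) (e : E) :
    σ ^ 2 / 8 * ‖e‖ ^ 2 ≤ ⟪D e + φ • e, D e⟫_ℝ := by
  have hpert : ‖D e - A e‖ ≤ ε * ‖e‖ := ((D - A).le_opNorm e).trans (by gcongr)
  have hDe : σ / 2 * ‖e‖ ≤ ‖D e‖ := by
    have h := norm_sub_le (D e) (D e - A e)
    rw [sub_sub_cancel] at h
    nlinarith [hσ e, mul_le_mul_of_nonneg_right hεσ (norm_nonneg e)]
  have hinner : -(ε * ‖e‖ ^ 2) ≤ ⟪e, D e⟫_ℝ := by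
    have h := abs_le.1 ((abs_real_inner_le_norm e (D e - A e)).trans
      (mul_le_mul_of_nonneg_left hpert (norm_nonneg e)))
    rw [inner_sub_right] at h
    nlinarith [hA e]
  rw [inner_add_left, real_inner_self_eq_norm_sq, real_inner_smul_left]
  nlinarith [mul_le_mul_of_nonneg_left hinner hφ, norm_nonneg e,
    pow_le_pow_left₀ (by nlinarith [norm_nonneg (D - A), norm_nonneg e]) hDe 2]

lemma ContinuousLinearMap.exists_mul_norm_le_of_injective [FiniteDimensional ℝ E]
    {A : E →L[ℝ] F} (hA : Function.Injective A) : ∃ σ > 0, ∀ u, σ * ‖u‖ ≤ ‖A u‖ := by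
  obtain ⟨K, hK, hanti⟩ := (A : E →ₗ[ℝ] F).exists_antilipschitzWith (LinearMap.ker_eq_bot.2 hA)
  refine ⟨(K : ℝ)⁻¹, by positivity, fun u => ?_⟩
  rw [inv_mul_le_iff₀ (by exact_mod_cast hK)]
  exact hanti.le_mul_norm (map_zero A) u

lemma HasFDerivAt.eventually_norm_bounds {G : E → F} {A : E →L[ℝ] F} {x : E}
    (hG : HasFDerivAt G A x) (hx : G x = 0) {σ η : ℝ} (hσ : ∀ u, σ * ‖u‖ ≤ ‖A u‖)
    (hη : 0 < η) :
    ∀ᶠ z in 𝓝 x, (σ - η) * ‖z - x‖ ≤ ‖G z‖ ∧ ‖G z‖ ≤ (‖A‖ + η) * ‖z - x‖ := by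
  filter_upwards [hG.isLittleO.def hη] with z hz
  rw [hx, sub_zero] at hz
  have h1 := norm_sub_le (G z) (G z - A (z - x))
  have h2 := norm_le_insert' (G z) (A (z - x))
  rw [sub_sub_cancel] at h1
  constructor <;> nlinarith [hσ (z - x), A.le_opNorm (z - x), norm_sub_rev (G z) (A (z - x))]

end LinearEstimates

section RegularizedNewton

variable {ι : Type*} [Fintype ι] [DecidableEq ι]

lemma Matrix.injective_toEuclideanCLM_iff_isUnit {M : Matrix ι ι ℝ} :
    Function.Injective (Matrix.toEuclideanCLM (𝕜 := ℝ) M) ↔ IsUnit M := by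
  rw [← Matrix.mulVec_injective_iff_isUnit]
  refine ⟨fun h v w hvw => WithLp.toLp_injective 2 (h (by simp [hvw])), fun h v w hvw => ?_⟩
  exact WithLp.ofLp_injective 2 (h (by simpa using congrArg WithLp.ofLp hvw))

lemma Matrix.toEuclideanCLM_apply_toEuclideanCLM_inv {M : Matrix ι ι ℝ} (hM : IsUnit M)
    (y : EuclideanSpace ℝ ι) :
    Matrix.toEuclideanCLM (𝕜 := ℝ) M (Matrix.toEuclideanCLM (𝕜 := ℝ) M⁻¹ y) = y := by
  rw [← mul_apply_eq_comp, ← map_mul,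
    Matrix.mul_nonsing_inv _ ((Matrix.isUnit_iff_isUnit_det _).1 hM), map_one, one_apply_eq_self]

lemma le_inner_toEuclideanCLM_inv {M : Matrix ι ι ℝ}
    {A : EuclideanSpace ℝ ι →L[ℝ] EuclideanSpace ℝ ι} {σ ε φ : ℝ} (hσ0 : 0 < σ)
    (hA : ∀ u, 0 ≤ ⟪u, A u⟫_ℝ) (hσ : ∀ u, σ * ‖u‖ ≤ ‖A u‖)
    (hMA : ‖Matrix.toEuclideanCLM (𝕜 := ℝ) M - A‖ ≤ ε) (hεσ : ε ≤ σ / 2) (hφ : 0 < φ)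
    (hφε : φ * ε ≤ σ ^ 2 / 8) (y : EuclideanSpace ℝ ι) :
    σ ^ 2 / (8 * (‖A‖ + ε + φ) ^ 2) * ‖y‖ ^ 2 ≤
      ⟪y, Matrix.toEuclideanCLM (𝕜 := ℝ) M (Matrix.toEuclideanCLM (𝕜 := ℝ) (M + φ • 1)⁻¹ y)⟫_ℝ := by
  set D := Matrix.toEuclideanCLM (𝕜 := ℝ) M
  have hT : ∀ e, Matrix.toEuclideanCLM (𝕜 := ℝ) (M + φ • 1) e = D e + φ • e := fun e => by
    simp [D]
  have key := le_inner_add_smul_apply hA hσ hMA hεσ hφ.le hφε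
  have hunit : IsUnit (M + φ • 1) := by
    refine Matrix.injective_toEuclideanCLM_iff_isUnit.1 <| (injective_iff_map_eq_zero _).2
      fun e he => norm_eq_zero.1 <| le_antisymm ?_ (norm_nonneg e)
    have h := key e
    rw [← hT, he, inner_zero_left] at h
    by_contra! hpos
    nlinarith [mul_pos (by positivity : 0 < σ ^ 2 / 8) (pow_pos hpos 2)]
  have he := Matrix.toEuclideanCLM_apply_toEuclideanCLM_inv hunit y
  set e := Matrix.toEuclideanCLM (𝕜 := ℝ) (M + φ • 1)⁻¹ y
  rw [hT] at he
  have hK : 0 < ‖A‖ + ε + φ := by linarith [norm_nonneg A, norm_nonneg (D - A)]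
  have hy : ‖y‖ ≤ (‖A‖ + ε + φ) * ‖e‖ := by
    have hD : ‖D‖ ≤ ‖A‖ + ε := by
      have := norm_add_le A (D - A)
      rw [add_sub_cancel] at this
      linarith
    calc ‖y‖ ≤ ‖D‖ * ‖e‖ + φ * ‖e‖ := by
          grw [← he, norm_add_le, D.le_opNorm, norm_smul, Real.norm_of_nonneg hφ.le]
      _ ≤ (‖A‖ + ε + φ) * ‖e‖ := by nlinarith [norm_nonneg e]
  calc σ ^ 2 / (8 * (‖A‖ + ε + φ) ^ 2) * ‖y‖ ^ 2
      ≤ σ ^ 2 / (8 * (‖A‖ + ε + φ) ^ 2) * ((‖A‖ + ε + φ) * ‖e‖) ^ 2 := by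
        gcongr
    _ = σ ^ 2 / 8 * ‖e‖ ^ 2 := by field_simp
    _ ≤ ⟪y, D e⟫_ℝ := he ▸ key e

end RegularizedNewton

section Jacobian

variable {ι : Type*} [Fintype ι] [DecidableEq ι]

lemma toEuclideanCLM_jacobian {G : EuclideanSpace ℝ ι → EuclideanSpace ℝ ι}
    {z : EuclideanSpace ℝ ι} (hG : DifferentiableAt ℝ G z) :
    Matrix.toEuclideanCLM (𝕜 := ℝ)
      (Matrix.of fun i j => fderiv ℝ (fun w => G w i) z (EuclideanSpace.single j 1)) =
      fderiv ℝ G z := by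
  have hcoord : ∀ i, fderiv ℝ (fun w => G w i) z = (EuclideanSpace.proj i).comp (fderiv ℝ G z) :=
    fun i => HasFDerivAt.fderiv (by exact (EuclideanSpace.proj i).hasFDerivAt.comp z hG.hasFDerivAt)
  refine ContinuousLinearMap.coe_injective
    ((EuclideanSpace.basisFun ι ℝ).toBasis.ext fun j => ?_)
  ext i
  simp [hcoord]

end Jacobian

section SecondDerivative

lemma deriv_deriv_eq_zero_of_isLocalMin_of_isLocalMax {g : ℝ → ℝ} {x : ℝ}
    (hmin : IsLocalMin g x) (hmax : IsLocalMax g x) : deriv (deriv g) x = 0 := by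
  have hconst : g =ᶠ[𝓝 x] fun _ => g x := (hmin.and hmax).mono fun y hy => le_antisymm hy.2 hy.1
  rw [(hconst.deriv.trans (Filter.Eventually.of_forall fun y => deriv_const y (g x))).deriv_eq,
    deriv_const]

lemma IsLocalMin.deriv_deriv_nonneg {g : ℝ → ℝ} {x : ℝ} (h : IsLocalMin g x)
    (hc : ContinuousAt g x) : 0 ≤ deriv (deriv g) x := by
  by_contra! hneg
  exact hneg.ne (deriv_deriv_eq_zero_of_isLocalMin_of_isLocalMax h
    (isLocalMax_of_deriv_deriv_neg hneg h.deriv_eq_zero hc))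

lemma IsLocalMax.deriv_deriv_nonpos {g : ℝ → ℝ} {x : ℝ} (h : IsLocalMax g x)
    (hc : ContinuousAt g x) : deriv (deriv g) x ≤ 0 := by
  by_contra! hpos
  exact hpos.ne' (deriv_deriv_eq_zero_of_isLocalMin_of_isLocalMax
    (isLocalMin_of_deriv_deriv_pos hpos h.deriv_eq_zero hc) h)

variable {E : Type*} [NormedAddCommGroup E] [NormedSpace ℝ E] {f : E → ℝ}

lemma tendsto_line (z a : E) : Tendsto (fun t : ℝ => z + t • a) (𝓝 0) (𝓝 z) :=
  (by fun_prop : Continuous fun t : ℝ => z + t • a).tendsto' 0 z (by simp)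

lemma hasDerivAt_line (z a : E) (t : ℝ) : HasDerivAt (fun s : ℝ => z + s • a) a t := by
  simpa using ((hasDerivAt_id t).smul_const a).const_add z

lemma hasDerivAt_comp_line (hf : Differentiable ℝ f) (z a : E) (t : ℝ) :
    HasDerivAt (fun s : ℝ => f (z + s • a)) (fderiv ℝ f (z + t • a) a) t :=
  (hf _).hasFDerivAt.comp_hasDerivAt t (hasDerivAt_line z a t)

lemma deriv_comp_line_zero (hf : Differentiable ℝ f) (z a : E) :
    deriv (fun s : ℝ => f (z + s • a)) 0 = fderiv ℝ f z a := by
  simpa using (hasDerivAt_comp_line hf z a 0).deriv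

lemma deriv_deriv_comp_line_zero (hf : ContDiff ℝ 2 f) (z a : E) :
    deriv (deriv fun s : ℝ => f (z + s • a)) 0 = fderiv ℝ (fderiv ℝ f) z a a := by
  have hf1 : Differentiable ℝ f := hf.differentiable (by norm_num)
  have hf2 : Differentiable ℝ (fderiv ℝ f) :=
    (hf.fderiv_right (m := 1) (by norm_num)).differentiable one_ne_zero
  rw [funext fun t => (hasDerivAt_comp_line hf1 z a t).deriv]
  have := ((ContinuousLinearMap.apply ℝ ℝ a).hasFDerivAt.comp z (hf2 z).hasFDerivAt)
  exact (this.comp_hasDerivAt_of_eq 0 (hasDerivAt_line z a 0) (by simp)).deriv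

end SecondDerivative

section Gradient

variable {F : Type*} [NormedAddCommGroup F] [InnerProductSpace ℝ F] [CompleteSpace F]
  {f : F → ℝ}

lemma contDiff_one_gradient (hf : ContDiff ℝ 2 f) : ContDiff ℝ 1 (gradient f) :=
  (InnerProductSpace.toDual ℝ F).symm.contDiff.comp (hf.fderiv_right (by norm_num))

lemma inner_fderiv_gradient (hf : ContDiff ℝ 2 f) (z u v : F) :
    ⟪fderiv ℝ (gradient f) z u, v⟫_ℝ = fderiv ℝ (fderiv ℝ f) z u v := by
  have hf2 : DifferentiableAt ℝ (fderiv ℝ f) z :=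
    (hf.fderiv_right (m := 1) (by norm_num)).differentiable one_ne_zero z
  have h : HasFDerivAt (gradient f) _ z :=
    (InnerProductSpace.toDual ℝ F).symm.toContinuousLinearEquiv.hasFDerivAt.comp z
      hf2.hasFDerivAt
  rw [h.fderiv]
  simp [InnerProductSpace.toDual_symm_apply]

end Gradient

section Saddle

variable {n m : ℕ}

def signFlip (n m : ℕ) : Emm n m →L[ℝ] Emm n m :=
  Matrix.toEuclideanCLM (𝕜 := ℝ) (Matrix.diagonal (Sum.elim (fun _ => 1) (fun _ => -1)))

lemma signFlip_signFlip (u : Emm n m) : signFlip n m (signFlip n m u) = u := by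
  ext (i | j) <;> simp [signFlip, Matrix.mulVec_diagonal]

lemma inner_signFlip_left (u v : Emm n m) :
    ⟪signFlip n m u, v⟫_ℝ = ⟪u, signFlip n m v⟫_ℝ := by
  simp [signFlip, PiLp.inner_apply, Fintype.sum_sum_type, Matrix.mulVec_diagonal, mul_comm]

lemma splice_add_splice (u : Emm n m) : splice u 0 + splice 0 u = u := by
  ext (i | j) <;> simp [splice, toE]

lemma signFlip_eq_splice_sub (u : Emm n m) : signFlip n m u = splice u 0 - splice 0 u := by
  ext (i | j) <;> simp [signFlip, splice, toE, Matrix.mulVec_diagonal]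

lemma Fvec_eq_signFlip_gradient (f : Emm n m → ℝ) :
    Fvec f = fun z => signFlip n m (gradient f z) := by
  funext z
  ext (i | j) <;> simp [Fvec, signFlip, toE, Matrix.mulVec_diagonal]

lemma splice_add_smul_splice_zero_left (zs u : Emm n m) (t : ℝ) :
    splice (zs + t • splice u 0) zs = zs + t • splice u 0 := by
  ext (i | j) <;> simp [splice, toE]

lemma splice_add_smul_splice_zero_right (zs u : Emm n m) (t : ℝ) :
    splice zs (zs + t • splice 0 u) = zs + t • splice 0 u := by
  ext (i | j) <;> simp [splice, toE]

variable {f : Emm n m → ℝ} {zs : Emm n m}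

lemma IsLocalSaddle.isLocalMin_line (h : IsLocalSaddle f zs) (u : Emm n m) :
    IsLocalMin (fun t : ℝ => f (zs + t • splice u 0)) 0 := by
  obtain ⟨U, hU, hsad⟩ := h
  filter_upwards [tendsto_line zs (splice u 0) hU] with t ht
  simpa [splice_add_smul_splice_zero_left] using (hsad _ ht).2

lemma IsLocalSaddle.isLocalMax_line (h : IsLocalSaddle f zs) (u : Emm n m) :
    IsLocalMax (fun t : ℝ => f (zs + t • splice 0 u)) 0 := by
  obtain ⟨U, hU, hsad⟩ := h
  filter_upwards [tendsto_line zs (splice 0 u) hU] with t ht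
  simpa [splice_add_smul_splice_zero_right] using (hsad _ ht).1

lemma IsLocalSaddle.fderiv_eq_zero (h : IsLocalSaddle f zs) (hf : Differentiable ℝ f) :
    fderiv ℝ f zs = 0 := by
  ext u
  rw [← splice_add_splice u, map_add, ← deriv_comp_line_zero hf, ← deriv_comp_line_zero hf,
    (h.isLocalMin_line u).deriv_eq_zero, (h.isLocalMax_line u).deriv_eq_zero]
  simp

lemma IsLocalSaddle.Fvec_eq_zero (h : IsLocalSaddle f zs) (hf : Differentiable ℝ f) :
    Fvec f zs = 0 := by
  simp [Fvec_eq_signFlip_gradient, gradient, h.fderiv_eq_zero hf]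

lemma fderiv_Fvec (hf : ContDiff ℝ 2 f) (z : Emm n m) :
    fderiv ℝ (Fvec f) z = (signFlip n m).comp (fderiv ℝ (gradient f) z) := by
  rw [Fvec_eq_signFlip_gradient]
  exact ((signFlip n m).hasFDerivAt.comp z
    ((contDiff_one_gradient hf).differentiable one_ne_zero z).hasFDerivAt).fderiv

lemma IsLocalSaddle.inner_fderiv_Fvec_nonneg (h : IsLocalSaddle f zs) (hf : ContDiff ℝ 2 f)
    (u : Emm n m) : 0 ≤ ⟪u, fderiv ℝ (Fvec f) zs u⟫_ℝ := by
  set f₂ := fderiv ℝ (fderiv ℝ f) zs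
  have hcont : ∀ a : Emm n m, ContinuousAt (fun t : ℝ => f (zs + t • a)) 0 := fun a =>
    (hf.continuous.comp (by fun_prop)).continuousAt
  have hfst : 0 ≤ f₂ (splice u 0) (splice u 0) := by
    rw [← deriv_deriv_comp_line_zero hf]
    exact (h.isLocalMin_line u).deriv_deriv_nonneg (hcont _)
  have hsnd : f₂ (splice 0 u) (splice 0 u) ≤ 0 := by
    rw [← deriv_deriv_comp_line_zero hf]
    exact (h.isLocalMax_line u).deriv_deriv_nonpos (hcont _)
  have hsymm : f₂ (splice 0 u) (splice u 0) = f₂ (splice u 0) (splice 0 u) :=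
    hf.contDiffAt.isSymmSndFDerivAt (by simp [minSmoothness_of_isRCLikeNormedField]) _ _
  calc 0 ≤ f₂ (splice u 0) (splice u 0) - f₂ (splice 0 u) (splice 0 u) := by linarith
    _ = f₂ (splice u 0 + splice 0 u) (splice u 0 - splice 0 u) := by
      simp only [map_add, map_sub, _root_.add_apply, hsymm]; abel
    _ = ⟪u, fderiv ℝ (Fvec f) zs u⟫_ℝ := by
      rw [splice_add_splice, ← signFlip_eq_splice_sub, fderiv_Fvec hf,
        ContinuousLinearMap.comp_apply, ← inner_signFlip_left, real_inner_comm,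
        inner_fderiv_gradient hf]

lemma contDiff_one_Fvec (hf : ContDiff ℝ 2 f) : ContDiff ℝ 1 (Fvec f) := by
  rw [Fvec_eq_signFlip_gradient]
  exact (signFlip n m).contDiff.comp (contDiff_one_gradient hf)

lemma toEuclideanCLM_DFmat (hf : ContDiff ℝ 2 f) (z : Emm n m) :
    Matrix.toEuclideanCLM (𝕜 := ℝ) (DFmat f z) = fderiv ℝ (Fvec f) z :=
  toEuclideanCLM_jacobian ((contDiff_one_Fvec hf).differentiable one_ne_zero z)

lemma injective_fderiv_Fvec (hf : ContDiff ℝ 2 f) (hH : IsUnit (hessMat f zs)) :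
    Function.Injective (fderiv ℝ (Fvec f) zs) := by
  have hH' : Matrix.toEuclideanCLM (𝕜 := ℝ) (hessMat f zs) = fderiv ℝ (gradient f) zs :=
    toEuclideanCLM_jacobian ((contDiff_one_gradient hf).differentiable one_ne_zero zs)
  rw [fderiv_Fvec hf, ContinuousLinearMap.coe_comp, ← hH']
  exact (Function.LeftInverse.injective signFlip_signFlip).comp
    (Matrix.injective_toEuclideanCLM_iff_isUnit.2 hH)

end Saddle

section DampedNewton

variable {n m : ℕ} {f : Emm n m → ℝ} {zs : Emm n m}

-- `⁻¹` is `Matrix.nonsing_inv`, which is `0` at singular matrices; near a saddle point the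
-- matrix is invertible (`le_inner_toEuclideanCLM_inv`).
def dampedNewtonField (f : Emm n m → ℝ) (φ : ℝ) (z : Emm n m) : Emm n m :=
  -toE ((DFmat f z + φ • (1 : Matrix (Idx n m) (Idx n m) ℝ))⁻¹ *ᵥ ofE (Fvec f z))

lemma IsLocalSaddle.inner_fderiv_dampedNewtonField_le (hzs : IsLocalSaddle f zs)
    (hf : ContDiff ℝ 2 f) {σ ε φ : ℝ} (hσ0 : 0 < σ)
    (hσ : ∀ u, σ * ‖u‖ ≤ ‖fderiv ℝ (Fvec f) zs u‖) (hεσ : ε ≤ σ / 2) (hφ : 0 < φ)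
    (hφε : φ * ε ≤ σ ^ 2 / 8) {z : Emm n m}
    (hz : dist (fderiv ℝ (Fvec f) z) (fderiv ℝ (Fvec f) zs) ≤ ε) :
    2 * ⟪Fvec f z, fderiv ℝ (Fvec f) z (dampedNewtonField f φ z)⟫_ℝ ≤
      -(2 * (σ ^ 2 / (8 * (‖fderiv ℝ (Fvec f) zs‖ + ε + φ) ^ 2))) * ‖Fvec f z‖ ^ 2 := by
  have hDA : ‖Matrix.toEuclideanCLM (𝕜 := ℝ) (DFmat f z) - fderiv ℝ (Fvec f) zs‖ ≤ ε := by
    rwa [toEuclideanCLM_DFmat hf, ← dist_eq_norm]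
  have h := le_inner_toEuclideanCLM_inv hσ0 (hzs.inner_fderiv_Fvec_nonneg hf) hσ hDA hεσ hφ hφε
    (Fvec f z)
  rw [toEuclideanCLM_DFmat hf] at h
  have hW : dampedNewtonField f φ z =
      -Matrix.toEuclideanCLM (𝕜 := ℝ) (DFmat f z + φ • 1)⁻¹ (Fvec f z) := rfl
  rw [hW, map_neg, inner_neg_right]
  linarith

theorem IsLocalSaddle.isLocExpStableEquilib_dampedNewtonField (hzs : IsLocalSaddle f zs)
    (hf : ContDiff ℝ 2 f) (hH : IsUnit (hessMat f zs)) {φ : ℝ} (hφ : 0 < φ) :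
    IsLocExpStableEquilib (dampedNewtonField f φ) zs := by
  have hF : Differentiable ℝ (Fvec f) := (contDiff_one_Fvec hf).differentiable one_ne_zero
  have hF0 : Fvec f zs = 0 := hzs.Fvec_eq_zero (hf.differentiable (by norm_num))
  set A := fderiv ℝ (Fvec f) zs
  obtain ⟨σ, hσ0, hσ⟩ := A.exists_mul_norm_le_of_injective (injective_fderiv_Fvec hf hH)
  set ε := min (σ / 2) (σ ^ 2 / (8 * φ))
  have hφε : φ * ε ≤ σ ^ 2 / 8 := by
    rw [← le_div_iff₀' hφ, div_div]; exact min_le_right _ _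
  obtain ⟨ρ, hρ, hball⟩ := Metric.nhds_basis_closedBall.eventually_iff.1
    (((contDiff_one_Fvec hf).continuous_fderiv one_ne_zero).continuousAt.eventually
      (closedBall_mem_nhds A (show 0 < ε by positivity)) |>.and
      ((hF zs).hasFDerivAt.eventually_norm_bounds hF0 hσ (half_pos hσ0)))
  refine isLocExpStableEquilib_of_lyapunov (V := fun z => ‖Fvec f z‖ ^ 2) (a := σ / 2)
    (b := ‖A‖ + σ / 2) (c := 2 * (σ ^ 2 / (8 * (‖A‖ + ε + φ) ^ 2))) hρ (half_pos hσ0)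
    (by positivity) (by positivity) (by simp [dampedNewtonField, hF0, toE, ofE])
    (fun z _ => (hF z).hasFDerivAt.norm_sq) (fun z hz => ?_) (fun z hz => ?_)
  · obtain ⟨hlow, hup⟩ := (hball hz).2
    rw [sub_half] at hlow
    exact ⟨pow_le_pow_left₀ (by positivity) hlow 2, pow_le_pow_left₀ (norm_nonneg _) hup 2⟩
  · simpa using hzs.inner_fderiv_dampedNewtonField_le hf hσ0 hσ (min_le_left _ _) hφ hφε
      (hball hz).1

end DampedNewton

/-- For `φ` large enough, saddle points are exponentially stable equilibria of the
`O(1)`-resolution ODE of the Regularised Damped Newton method,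
`ż = −(∇F(z) + φ I)⁻¹ F(z)`. -/
theorem stmt17 {n m : ℕ} (f : Emm n m → ℝ) (L : ℝ)
    (hf : ContDiff ℝ 2 f) (hL : 0 < L) (hA : AssumptionA f L)
    (zs : Emm n m) (hzs : IsLocalSaddle f zs) :
    ∃ φMin : ℝ, L ≤ φMin ∧ ∀ φ > φMin,
      IsLocExpStableEquilib
        (fun z => -toE
          ((DFmat f z + φ • (1 : Matrix (Idx n m) (Idx n m) ℝ))⁻¹ *ᵥ ofE (Fvec f z)))
        zs :=
  ⟨L, le_rfl, fun _ hφ => hzs.isLocExpStableEquilib_dampedNewtonField hf (hA.1 zs hzs)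
    (hL.trans hφ)⟩
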